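/- arXiv:2104.10799 — 2 statements merged into one kernel-verified Lean document; each statement's English description precedes it below -/
import Mathlib

section
/- Let Y = (Y_1, Y_2, Y_3, Y_4) be an abstract scrambled (0,2,3)-net in base 2, let ε ∈ (0, 1/4), and set D = [0, 1/2 + ε)^3 \ [0, 1/2)^3. Then P(Y_1 ∈ D, Y_2 ∈ D, Y_3 ∈ D) = ε^3, while P(Y_i ∈ D) = (1/2 + ε)^3 − (1/2)^3 for each i ∈ {1, 2, 3}. -/
/-!
In a `(0,2,3)`-net in base `2` every elementary interval of volume `1/4` holds exactly one point:
in each coordinate the four points occupy the four quarters of `[0,1)`, and no two points have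
two coordinates in `[1/2,1)`. As `D ⊆ [0,3/4)³`, if `Y₁, Y₂, Y₃ ∈ D` then `Y₄` lies in the corner
cell `[3/4,1)³`, and `Y₄` lies there exactly when each of `Y₁, Y₂, Y₃` lies in a quarter cell with
one coordinate in `[1/2,3/4)` and the others in `[0,1/2)`. Such a cell meets `D` in the fraction
`4ε` of its volume, so conditioning on the cells of `Y₁, Y₂, Y₃` gives
`P(Y₁, Y₂, Y₃ ∈ D) = (4ε)³ P(Y₄ ∈ [3/4,1)³) = (4ε)³ / 64`. The marginals hold because every point
of an abstract scrambled net is uniformly distributed.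
-/

open MeasureTheory ProbabilityTheory Filter
open scoped ENNReal Classical

namespace LHSPaper

/-- The anchored box `[0,a) = ∏_i [0, a_i)` in `[0,1)^d`. -/
def anchoredBox {d : ℕ} (a : Fin d → ℝ) : Set (Fin d → ℝ) := {x | ∀ i, x i ∈ Set.Ico 0 (a i)}

/-- `C^d_0`, the collection of anchored boxes `[0,a)` with `a ∈ [0,1]^d`. -/
def anchoredBoxes (d : ℕ) : Set (Set (Fin d → ℝ)) :=
  {S | ∃ a : Fin d → ℝ, (∀ i, a i ∈ Set.Icc (0 : ℝ) 1) ∧ S = anchoredBox a}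

/-- `D^d_0`, the collection of differences `B \ A` of anchored boxes. -/
def boxDiffs (d : ℕ) : Set (Set (Fin d → ℝ)) :=
  {S | ∃ A ∈ anchoredBoxes d, ∃ B ∈ anchoredBoxes d, S = B \ A}

/-- The half-open unit cube `[0,1)^d`. -/
def unitCube (d : ℕ) : Set (Fin d → ℝ) := {x | ∀ i, x i ∈ Set.Ico (0 : ℝ) 1}

/-- `γ`-negative dependence of the indicators of the events `A 1, …, A N`. -/
def GammaNegDep {Ω : Type*} [MeasurableSpace Ω] (μ : Measure Ω) {N : ℕ}
    (γ : ℝ≥0∞) (A : Fin N → Set Ω) : Prop :=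
  ∀ J : Finset (Fin N), J.Nonempty →
    μ (⋂ j ∈ J, A j) ≤ γ * ∏ j ∈ J, μ (A j) ∧
    μ (⋂ j ∈ J, (A j)ᶜ) ≤ γ * ∏ j ∈ J, μ (A j)ᶜ

/-- The `𝒮`-correlation number of a random point tuple `X`. -/
noncomputable def corrNum {Ω : Type*} [MeasurableSpace Ω] (μ : Measure Ω) {N d : ℕ}
    (𝒮 : Set (Set (Fin d → ℝ))) (X : Fin N → Ω → Fin d → ℝ) : ℝ≥0∞ :=
  ⨆ (S : Set (Fin d → ℝ)) (_ : S ∈ 𝒮) (J : Finset (Fin N)) (_ : J.Nonempty),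
    max (μ (⋂ j ∈ J, {ω | X j ω ∈ S}) / ∏ j ∈ J, μ {ω | X j ω ∈ S})
        (μ (⋂ j ∈ J, {ω | X j ω ∉ S}) / ∏ j ∈ J, μ {ω | X j ω ∉ S})

instance (N : ℕ) : MeasurableSpace (Equiv.Perm (Fin N)) := ⊤

instance (N : ℕ) : Nonempty (Equiv.Perm (Fin N)) := ⟨Equiv.refl _⟩

/-- Value types of the sources of randomness of a Latin hypercube sample:
`d` random permutations and `N·d` random reals. -/
def lhsβ (d N : ℕ) : (Fin d ⊕ (Fin N × Fin d)) → Type :=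
  fun i => Sum.elim (fun _ => Equiv.Perm (Fin N)) (fun _ => ℝ) i

noncomputable def lhsMS (d N : ℕ) : (i : Fin d ⊕ (Fin N × Fin d)) → MeasurableSpace (lhsβ d N i) :=
  fun i => match i with
  | .inl _ => ⊤
  | .inr _ => inferInstanceAs (MeasurableSpace ℝ)

def lhsFun {Ω : Type*} {d N : ℕ} (π : Fin d → Ω → Equiv.Perm (Fin N))
    (U : Fin N → Ω → Fin d → ℝ) : (i : Fin d ⊕ (Fin N × Fin d)) → Ω → lhsβ d N i :=
  fun i => match i with
  | .inl j => π j
  | .inr p => fun ω => U p.1 ω p.2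

/-- `X` is a Latin hypercube sample of `N` points in `[0,1)^d`, built from the
uniformly distributed random permutations `π_j` and the uniformly distributed
random variables `U_{n,j}`, all mutually independent. -/
def IsLHS {Ω : Type*} [MeasurableSpace Ω] (μ : Measure Ω) (d N : ℕ)
    (X : Fin N → Ω → Fin d → ℝ)
    (π : Fin d → Ω → Equiv.Perm (Fin N)) (U : Fin N → Ω → Fin d → ℝ) : Prop :=
  (∀ j, Measure.map (π j) μ = (PMF.uniformOfFintype (Equiv.Perm (Fin N))).toMeasure) ∧
  (∀ n j, Measure.map (fun ω => U n ω j) μ = volume.restrict (Set.Ico (0 : ℝ) 1)) ∧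
  iIndepFun (m := lhsMS d N) (lhsFun π U) μ ∧
  (∀ n j ω, X n ω j = (((π j ω) n : ℕ) + U n ω j) / N)

/-- An elementary interval in base `b` of order `k` in `[0,1)^d`. -/
def IsElemInterval (b d k : ℕ) (E : Set (Fin d → ℝ)) : Prop :=
  ∃ ℓ : Fin d → ℕ, ∃ a : Fin d → ℕ, (∀ i, a i < b ^ ℓ i) ∧ (∑ i, ℓ i = k) ∧
    E = {x | ∀ i, x i ∈ Set.Ico ((a i : ℝ) / b ^ ℓ i) (((a i : ℝ) + 1) / b ^ ℓ i)}

/-- A `(t,m,d)`-net in base `b`: `b^m` points in `[0,1)^d` such that every elementary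
interval of order `m - t` contains exactly `b^t` points (with multiplicity). -/
def IsNet (b d m t : ℕ) (P : Fin (b ^ m) → Fin d → ℝ) : Prop :=
  (∀ n, P n ∈ unitCube d) ∧
  ∀ E : Set (Fin d → ℝ), IsElemInterval b d (m - t) E →
    (Finset.univ.filter fun n => P n ∈ E).card = b ^ t

/-- A `b`-ary scrambling of depth `ℓ`: a self-map of `[0,1)` mapping, for each
`k ∈ {1,…,ℓ}`, elementary intervals of order `k` into elementary intervals of order `k`,
distinct ones into distinct ones. -/
def IsScrambling (b ℓ : ℕ) (σ : ℝ → ℝ) : Prop :=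
  (∀ x ∈ Set.Ico (0 : ℝ) 1, σ x ∈ Set.Ico (0 : ℝ) 1) ∧
  ∀ k, 1 ≤ k → k ≤ ℓ → ∃ f : ℕ → ℕ,
    (∀ a < b ^ k, f a < b ^ k) ∧
    (∀ a < b ^ k, ∀ a' < b ^ k, a ≠ a' → f a ≠ f a') ∧
    (∀ a < b ^ k, ∀ x ∈ Set.Ico ((a : ℝ) / b ^ k) (((a : ℝ) + 1) / b ^ k),
      σ x ∈ Set.Ico ((f a : ℝ) / b ^ k) (((f a : ℝ) + 1) / b ^ k))

/-- A basic cube of an abstract scrambled `(t,m,d)`-net in base `b`. -/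
def IsBasicCube (b d m t : ℕ) (C : Set (Fin d → ℝ)) : Prop :=
  ∃ k : Fin d → ℕ, (∀ j, k j < b ^ (m - t)) ∧
    C = {x | ∀ j, x j ∈ Set.Ico ((k j : ℝ) / b ^ (m - t)) (((k j : ℝ) + 1) / b ^ (m - t))}

/-- An abstract scrambled `(t,m,d)`-net in base `b`. -/
def IsAbstractScrambledNet {Ω : Type*} [MeasurableSpace Ω] (μ : Measure Ω)
    (b d m t : ℕ) (Y : Fin (b ^ m) → Ω → (Fin d → ℝ)) : Prop :=
  (∀ᵐ ω ∂μ, IsNet b d m t fun n => Y n ω) ∧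
  (∀ i C, IsBasicCube b d m t C → μ {ω | Y i ω ∈ C} = ((b : ℝ≥0∞) ^ (d * (m - t)))⁻¹) ∧
  (∀ M : Set (Fin d → ℝ), MeasurableSet M →
    ∀ J : Finset (Fin (b ^ m)), J.Nonempty →
    ∀ C : Fin (b ^ m) → Set (Fin d → ℝ), (∀ j ∈ J, IsBasicCube b d m t (C j)) →
      μ (⋂ j ∈ J, {ω | Y j ω ∈ C j}) ≠ 0 →
      (μ[|⋂ j ∈ J, {ω | Y j ω ∈ C j}]) (⋂ j ∈ J, {ω | Y j ω ∈ M}) =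
        ∏ j ∈ J, volume (M ∩ C j) / volume (C j))

section Grid

variable {d q : ℕ}

def gridCell (q : ℕ) (k : Fin d → Fin q) : Set (Fin d → ℝ) :=
  Set.univ.pi fun j => Set.Ico ((k j : ℝ) / q) (((k j : ℝ) + 1) / q)

lemma mem_Ico_div_iff_floor_eq {x : ℝ} (hq : 0 < q) (hx : 0 ≤ x) (a : ℕ) :
    x ∈ Set.Ico ((a : ℝ) / q) (((a : ℝ) + 1) / q) ↔ ⌊q * x⌋₊ = a := by
  have hq' : (0 : ℝ) < q := by exact_mod_cast hq
  rw [Nat.floor_eq_iff (by positivity), Set.mem_Ico, div_le_iff₀ hq', lt_div_iff₀ hq',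
    mul_comm x]

lemma mem_gridCell_iff {x : Fin d → ℝ} {k : Fin d → Fin q} (hq : 0 < q) (hx : 0 ≤ x) :
    x ∈ gridCell q k ↔ ∀ j, ⌊q * x j⌋₊ = k j := by
  simp only [gridCell, Set.mem_univ_pi, mem_Ico_div_iff_floor_eq hq (hx _)]

lemma nonneg_of_mem_gridCell {x : Fin d → ℝ} {k : Fin d → Fin q} (hx : x ∈ gridCell q k) :
    0 ≤ x := fun j => le_trans (by positivity) (Set.mem_univ_pi.1 hx j).1

lemma eq_of_mem_gridCell {x : Fin d → ℝ} {k k' : Fin d → Fin q} (hk : x ∈ gridCell q k)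
    (hk' : x ∈ gridCell q k') : k = k' := by
  funext j
  have hq : 0 < q := Fin.pos (k j)
  have hx := nonneg_of_mem_gridCell hk
  exact Fin.ext (((mem_gridCell_iff hq hx).1 hk j).symm.trans ((mem_gridCell_iff hq hx).1 hk' j))

lemma exists_mem_gridCell {x : Fin d → ℝ} (hq : 0 < q) (hx : x ∈ unitCube d) :
    ∃ k, x ∈ gridCell q k := by
  have hx0 : 0 ≤ x := fun j => (hx j).1
  refine ⟨fun j => ⟨⌊q * x j⌋₊, ?_⟩, (mem_gridCell_iff hq hx0).2 fun j => rfl⟩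
  have : (q : ℝ) * x j < q := mul_lt_of_lt_one_right (by exact_mod_cast hq) (hx j).2
  exact (Nat.floor_lt (mul_nonneg q.cast_nonneg (hx0 j))).2 this

lemma pairwiseDisjoint_gridCell (S : Set (Fin d → Fin q)) : S.PairwiseDisjoint (gridCell q) :=
  fun _ _ _ _ hne => Set.disjoint_left.2 fun _ hk hk' => hne (eq_of_mem_gridCell hk hk')

lemma measurableSet_gridCell (k : Fin d → Fin q) : MeasurableSet (gridCell q k) :=
  MeasurableSet.univ_pi fun _ => measurableSet_Ico

lemma volume_Ico_div (hq : 0 < q) (a : ℕ) :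
    volume (Set.Ico ((a : ℝ) / q) (((a : ℝ) + 1) / q)) = (q : ℝ≥0∞)⁻¹ := by
  rw [Real.volume_Ico, ← ENNReal.ofReal_natCast, ← ENNReal.ofReal_inv_of_pos (by exact_mod_cast hq)]
  congr 1
  ring

lemma volume_gridCell (k : Fin d → Fin q) : volume (gridCell q k) = (q : ℝ≥0∞)⁻¹ ^ d := by
  simp only [gridCell, volume_pi_pi, fun j => volume_Ico_div (Fin.pos (k j)) (k j),
    Finset.prod_const, Finset.card_univ, Fintype.card_fin]

lemma sum_volume_gridCell (hq : q ≠ 0) : ∑ k : Fin d → Fin q, volume (gridCell q k) = 1 := by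
  simp only [volume_gridCell, Finset.sum_const, Finset.card_univ, Fintype.card_fun,
    Fintype.card_fin, nsmul_eq_mul, Nat.cast_pow, ← mul_pow]
  rw [ENNReal.mul_inv_cancel (by exact_mod_cast hq) (ENNReal.natCast_ne_top q), one_pow]

lemma isBasicCube_gridCell {b m t : ℕ} (k : Fin d → Fin (b ^ (m - t))) :
    IsBasicCube b d m t (gridCell (b ^ (m - t)) k) :=
  ⟨fun j => k j, fun j => (k j).isLt, by ext x; simp [gridCell]⟩

end Grid

section MeasureFacts

variable {Ω : Type*} [MeasurableSpace Ω] {μ : Measure Ω}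

lemma nullMeasurableSet_of_measure_add_measure_compl_le [IsFiniteMeasure μ] {s : Set Ω}
    (h : μ s + μ sᶜ ≤ μ Set.univ) : NullMeasurableSet s μ := by
  set t := toMeasurable μ s
  set v := toMeasurable μ sᶜ
  have hv : MeasurableSet v := measurableSet_toMeasurable μ sᶜ
  have htv : t ∪ v = Set.univ :=
    Set.eq_univ_of_forall fun x => (em (x ∈ s)).elim (fun hx => Or.inl (subset_toMeasurable μ s hx))
      (fun hx => Or.inr (subset_toMeasurable μ sᶜ hx))
  have hnull : μ (t ∩ v) = 0 := by
    have := measure_union_add_inter (μ := μ) t hv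
    rw [htv, measure_toMeasurable, measure_toMeasurable] at this
    have hle : μ Set.univ + μ (t ∩ v) ≤ μ Set.univ + 0 := by rw [add_zero, this]; exact h
    exact nonpos_iff_eq_zero.1 ((ENNReal.add_le_add_iff_left (measure_ne_top μ _)).1 hle)
  refine (measurableSet_toMeasurable μ s).nullMeasurableSet.congr
    ((ae_eq_set (s := t) (t := s)).2 ⟨?_, ?_⟩)
  · exact measure_mono_null (Set.inter_subset_inter_right t (subset_toMeasurable μ sᶜ)) hnull
  · rw [Set.sdiff_eq_empty.2 (subset_toMeasurable μ s), measure_empty]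

lemma measure_eq_sum_measure_inter {ι : Type*} {S : Finset ι} {E : ι → Set Ω}
    (hE : ∀ i ∈ S, NullMeasurableSet (E i) μ) (hd : (S : Set ι).PairwiseDisjoint E) {T : Set Ω}
    (hT : T ≤ᵐ[μ] ⋃ i ∈ S, E i) : μ T = ∑ i ∈ S, μ (T ∩ E i) := by
  have hU : NullMeasurableSet (⋃ i ∈ S, E i) μ := .biUnion S.countable_toSet hE
  have hrestrict : μ.restrict (⋃ i ∈ S, E i) = ∑ i ∈ S, μ.restrict (E i) := by
    ext s hs
    rw [Measure.restrict_apply hs, Measure.finsetSum_apply, Set.inter_iUnion₂,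
      measure_biUnion_finset₀ (hd.mono_on fun _ _ => Set.inter_subset_right).aedisjoint
        fun i hi => hs.nullMeasurableSet.inter (hE i hi)]
    exact Finset.sum_congr rfl fun i _ => (Measure.restrict_apply hs).symm
  calc μ T = μ (T ∩ ⋃ i ∈ S, E i) + μ (T \ ⋃ i ∈ S, E i) := (measure_inter_add_sdiff₀ T hU).symm
    _ = μ.restrict (⋃ i ∈ S, E i) T := by
      rw [ae_le_set.1 hT, add_zero, Measure.restrict_apply₀' hU]
    _ = ∑ i ∈ S, μ (T ∩ E i) := by
      rw [hrestrict, Measure.coe_finsetSum, Finset.sum_apply]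
      exact Finset.sum_congr rfl fun i hi => Measure.restrict_apply₀' (hE i hi)

lemma measure_eq_finsum_measure_inter {ι : Type*} {S : Set ι} (hS : S.Finite) {E : ι → Set Ω}
    (hE : ∀ i ∈ S, NullMeasurableSet (E i) μ) (hd : S.PairwiseDisjoint E) {T : Set Ω}
    (hT : T ≤ᵐ[μ] ⋃ i ∈ S, E i) : μ T = ∑ᶠ i ∈ S, μ (T ∩ E i) := by
  rw [finsum_mem_eq_finite_toFinset_sum _ hS]
  exact measure_eq_sum_measure_inter (by simpa using hE) (by simpa using hd) (by simpa using hT)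

lemma measure_inter_eq_cond_mul {s : Set Ω} (hs : NullMeasurableSet s μ) (hs' : μ s ≠ ∞)
    (t : Set Ω) : μ (t ∩ s) = μ[t|s] * μ s := by
  by_cases h0 : μ s = 0
  · rw [h0, mul_zero]
    exact measure_mono_null Set.inter_subset_right h0
  rw [ProbabilityTheory.cond, Measure.smul_apply, Measure.restrict_apply₀' hs, smul_eq_mul,
    mul_comm, ← mul_assoc, ENNReal.mul_inv_cancel h0 hs', one_mul]

end MeasureFacts

def cellEvent {Ω : Type*} {N d q : ℕ} (Y : Fin N → Ω → Fin d → ℝ) (J : Finset (Fin N))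
    (K : Fin N → Fin d → Fin q) : Set Ω :=
  ⋂ j ∈ J, {ω | Y j ω ∈ gridCell q (K j)}

lemma mem_cellEvent {Ω : Type*} {N d q : ℕ} {Y : Fin N → Ω → Fin d → ℝ} {J : Finset (Fin N)}
    {K : Fin N → Fin d → Fin q} {ω : Ω} :
    ω ∈ cellEvent Y J K ↔ ∀ j ∈ J, Y j ω ∈ gridCell q (K j) := by
  simp [cellEvent]

namespace IsAbstractScrambledNet

variable {Ω : Type*} [MeasurableSpace Ω] {μ : Measure Ω} {b d m t : ℕ}
  {Y : Fin (b ^ m) → Ω → Fin d → ℝ}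

lemma measure_mem_gridCell (hY : IsAbstractScrambledNet μ b d m t Y) (n : Fin (b ^ m))
    (k : Fin d → Fin (b ^ (m - t))) :
    μ {ω | Y n ω ∈ gridCell (b ^ (m - t)) k} = volume (gridCell (b ^ (m - t)) k) := by
  rw [hY.2.1 n _ (isBasicCube_gridCell k), volume_gridCell, Nat.cast_pow, ENNReal.inv_pow,
    ENNReal.inv_pow, ← pow_mul, mul_comm]

lemma ae_exists_mem_gridCell (hb : 0 < b) (hY : IsAbstractScrambledNet μ b d m t Y) :
    ∀ᵐ ω ∂μ, ∀ n, ∃ k, Y n ω ∈ gridCell (b ^ (m - t)) k := by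
  filter_upwards [hY.1] with ω hω n
  exact exists_mem_gridCell (pow_pos hb _) (hω.1 n)

variable [IsProbabilityMeasure μ]

/- `Y` is not assumed measurable; the cell events are null-measurable all the same, since they
cover `Ω` almost surely and their probabilities add up to `1`. -/
lemma nullMeasurableSet_mem_gridCell (hb : 0 < b) (hY : IsAbstractScrambledNet μ b d m t Y)
    (n : Fin (b ^ m)) (k : Fin d → Fin (b ^ (m - t))) :
    NullMeasurableSet {ω | Y n ω ∈ gridCell (b ^ (m - t)) k} μ := by
  apply nullMeasurableSet_of_measure_add_measure_compl_le
  have hcompl : {ω | Y n ω ∈ gridCell (b ^ (m - t)) k}ᶜ ≤ᵐ[μ]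
      ⋃ k' ∈ Finset.univ.erase k, {ω | Y n ω ∈ gridCell (b ^ (m - t)) k'} := by
    filter_upwards [hY.ae_exists_mem_gridCell hb] with ω hω hωk
    obtain ⟨k', hk'⟩ := hω n
    exact Set.mem_iUnion₂.2
      ⟨k', Finset.mem_erase.2 ⟨fun h => hωk (h ▸ hk'), Finset.mem_univ _⟩, hk'⟩
  calc μ {ω | Y n ω ∈ gridCell (b ^ (m - t)) k} + μ {ω | Y n ω ∈ gridCell (b ^ (m - t)) k}ᶜ
      ≤ μ {ω | Y n ω ∈ gridCell (b ^ (m - t)) k} +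
          ∑ k' ∈ Finset.univ.erase k, μ {ω | Y n ω ∈ gridCell (b ^ (m - t)) k'} :=
        add_le_add le_rfl ((measure_mono_ae hcompl).trans (measure_biUnion_finset_le _ _))
    _ = ∑ k' : Fin d → Fin (b ^ (m - t)), volume (gridCell _ k') := by
        rw [Finset.add_sum_erase _ (fun k' => μ {ω | Y n ω ∈ gridCell _ k'}) (Finset.mem_univ k)]
        simp only [hY.measure_mem_gridCell]
    _ = μ Set.univ := by rw [sum_volume_gridCell (pow_pos hb _).ne', measure_univ]

lemma nullMeasurableSet_cellEvent (hb : 0 < b) (hY : IsAbstractScrambledNet μ b d m t Y)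
    (J : Finset (Fin (b ^ m))) (K : Fin (b ^ m) → Fin d → Fin (b ^ (m - t))) :
    NullMeasurableSet (cellEvent Y J K) μ :=
  .biInter J.countable_toSet fun j _ => hY.nullMeasurableSet_mem_gridCell hb j (K j)

lemma measure_inter_cellEvent (hb : 0 < b) (hY : IsAbstractScrambledNet μ b d m t Y)
    {M : Set (Fin d → ℝ)} (hM : MeasurableSet M) {J : Finset (Fin (b ^ m))} (hJ : J.Nonempty)
    (K : Fin (b ^ m) → Fin d → Fin (b ^ (m - t))) :
    μ ((⋂ j ∈ J, {ω | Y j ω ∈ M}) ∩ cellEvent Y J K) =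
      (∏ j ∈ J, volume (M ∩ gridCell _ (K j)) / volume (gridCell _ (K j))) *
        μ (cellEvent Y J K) := by
  by_cases h0 : μ (cellEvent Y J K) = 0
  · rw [h0, mul_zero]
    exact measure_mono_null Set.inter_subset_right h0
  rw [measure_inter_eq_cond_mul (hY.nullMeasurableSet_cellEvent hb J K) (measure_ne_top μ _),
    cellEvent, hY.2.2 M hM J hJ _ (fun j _ => isBasicCube_gridCell (K j)) h0]

lemma measure_mem_eq_volume (hb : 0 < b) (hY : IsAbstractScrambledNet μ b d m t Y)
    {M : Set (Fin d → ℝ)} (hM : MeasurableSet M) (hMu : M ⊆ unitCube d) (n : Fin (b ^ m)) :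
    μ {ω | Y n ω ∈ M} = volume M := by
  have hq : 0 < b ^ (m - t) := pow_pos hb _
  have hcell (k : Fin d → Fin (b ^ (m - t))) :
      μ ({ω | Y n ω ∈ M} ∩ {ω | Y n ω ∈ gridCell _ k}) = volume (M ∩ gridCell _ k) := by
    have h := hY.measure_inter_cellEvent hb hM (Finset.singleton_nonempty n) fun _ => k
    simp only [cellEvent, Finset.set_biInter_singleton, Finset.prod_singleton] at h
    rw [h, hY.measure_mem_gridCell, ENNReal.div_mul_cancel] <;> rw [volume_gridCell]
    · exact pow_ne_zero _ (ENNReal.inv_ne_zero.2 (ENNReal.natCast_ne_top _))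
    · exact ENNReal.pow_ne_top (ENNReal.inv_ne_top.2 (Nat.cast_ne_zero.2 hq.ne'))
  calc μ {ω | Y n ω ∈ M}
      = ∑ k, μ ({ω | Y n ω ∈ M} ∩ {ω | Y n ω ∈ gridCell (b ^ (m - t)) k}) := by
        refine measure_eq_sum_measure_inter (fun k _ => hY.nullMeasurableSet_mem_gridCell hb n k)
          (fun k _ k' _ hkk' => ?_) ?_
        · exact Set.disjoint_left.2 fun ω h h' => hkk' (eq_of_mem_gridCell h h')
        · filter_upwards [hY.ae_exists_mem_gridCell hb] with ω hω _
          obtain ⟨k, hk⟩ := hω n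
          exact Set.mem_iUnion₂.2 ⟨k, Finset.mem_univ _, hk⟩
    _ = ∑ k, volume (M ∩ gridCell (b ^ (m - t)) k) := Finset.sum_congr rfl fun k _ => hcell k
    _ = volume M := by
        refine (measure_eq_sum_measure_inter
          (fun k _ => (measurableSet_gridCell k).nullMeasurableSet) (pairwiseDisjoint_gridCell _)
          (Filter.Eventually.of_forall fun x hx => ?_)).symm
        obtain ⟨k, hk⟩ := exists_mem_gridCell hq (hMu hx)
        exact Set.mem_iUnion₂.2 ⟨k, Finset.mem_univ _, hk⟩

end IsAbstractScrambledNet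

namespace IsNet

variable {b d m : ℕ} {P : Fin (b ^ m) → Fin d → ℝ}

lemma eq_of_mem_elemInterval (hP : IsNet b d m 0 P) {ℓ a : Fin d → ℕ} (ha : ∀ i, a i < b ^ ℓ i)
    (hℓ : ∑ i, ℓ i = m) {n n' : Fin (b ^ m)}
    (hn : ∀ i, P n i ∈ Set.Ico ((a i : ℝ) / b ^ ℓ i) (((a i : ℝ) + 1) / b ^ ℓ i))
    (hn' : ∀ i, P n' i ∈ Set.Ico ((a i : ℝ) / b ^ ℓ i) (((a i : ℝ) + 1) / b ^ ℓ i)) :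
    n = n' := by
  have h := hP.2 _ ⟨ℓ, a, ha, hℓ, rfl⟩
  rw [pow_zero] at h
  exact Finset.card_le_one.1 h.le n (by simpa using hn) n' (by simpa using hn')

lemma injective_gridCell_coord (hP : IsNet b d m 0 P) {K : Fin (b ^ m) → Fin d → Fin (b ^ m)}
    (hK : ∀ n, P n ∈ gridCell (b ^ m) (K n)) (c : Fin d) : Function.Injective fun n => K n c := by
  intro n n' (h : K n c = K n' c)
  set ℓ : Fin d → ℕ := Pi.single c m
  have hmem (n : Fin (b ^ m)) (i : Fin d) :
      P n i ∈ Set.Ico (((Pi.single c (K n c : ℕ) : Fin d → ℕ) i : ℝ) / (b : ℝ) ^ ℓ i)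
        ((((Pi.single c (K n c : ℕ) : Fin d → ℕ) i : ℝ) + 1) / (b : ℝ) ^ ℓ i) := by
    rcases eq_or_ne i c with rfl | hi
    · simpa [ℓ] using Set.mem_univ_pi.1 (hK n) i
    · simpa [ℓ, hi] using hP.1 n i
  refine hP.eq_of_mem_elemInterval (fun i => ?_) (by simp [ℓ]) (hmem n) (h ▸ hmem n')
  rcases eq_or_ne i c with rfl | hi
  · simp [ℓ]
  · simp [ℓ, hi]

lemma eq_of_two_coords_ge_half {P : Fin (2 ^ 2) → Fin d → ℝ} (hP : IsNet 2 d 2 0 P)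
    {c c' : Fin d} (hcc' : c ≠ c') {n n' : Fin (2 ^ 2)} (hn : 1 / 2 ≤ P n c ∧ 1 / 2 ≤ P n c')
    (hn' : 1 / 2 ≤ P n' c ∧ 1 / 2 ≤ P n' c') : n = n' := by
  set ℓ : Fin d → ℕ := Pi.single c 1 + Pi.single c' 1
  have hmem (n : Fin (2 ^ 2)) (h : 1 / 2 ≤ P n c ∧ 1 / 2 ≤ P n c') (i : Fin d) :
      P n i ∈ Set.Ico ((ℓ i : ℝ) / (2 : ℕ) ^ ℓ i) (((ℓ i : ℝ) + 1) / (2 : ℕ) ^ ℓ i) := by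
    have hi := hP.1 n i
    rcases eq_or_ne i c with rfl | hic
    · simp only [ℓ, Pi.add_apply, Pi.single_eq_same, Pi.single_eq_of_ne hcc']
      exact ⟨by norm_num; linarith [h.1], by norm_num; exact hi.2⟩
    · rcases eq_or_ne i c' with rfl | hic'
      · simp only [ℓ, Pi.add_apply, Pi.single_eq_same, Pi.single_eq_of_ne hic]
        exact ⟨by norm_num; linarith [h.2], by norm_num; exact hi.2⟩
      · simpa [ℓ, hic, hic'] using hi
  refine hP.eq_of_mem_elemInterval (ℓ := ℓ) (a := ℓ) (fun i => ?_) ?_ (hmem n hn) (hmem n' hn')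
  · simp only [ℓ, Pi.add_apply, Pi.single_apply]
    split_ifs <;> norm_num
  · simp [ℓ, Finset.sum_add_distrib]

end IsNet

section Boxes

variable {d : ℕ}

lemma anchoredBox_eq_pi (a : Fin d → ℝ) : anchoredBox a = Set.univ.pi fun i => Set.Ico 0 (a i) := by
  ext x
  simp [anchoredBox]

lemma measurableSet_anchoredBox (a : Fin d → ℝ) : MeasurableSet (anchoredBox a) := by
  rw [anchoredBox_eq_pi]
  exact MeasurableSet.univ_pi fun _ => measurableSet_Ico

lemma anchoredBox_subset_unitCube {a : Fin d → ℝ} (ha : ∀ i, a i ≤ 1) :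
    anchoredBox a ⊆ unitCube d :=
  fun _ hx i => ⟨(hx i).1, (hx i).2.trans_le (ha i)⟩

lemma volume_anchoredBox_const {r : ℝ} (hr : 0 ≤ r) :
    volume (anchoredBox fun _ : Fin d => r) = ENNReal.ofReal (r ^ d) := by
  rw [anchoredBox_eq_pi, volume_pi_pi]
  simp [ENNReal.ofReal_pow hr]

lemma volume_anchoredBox_diff {r s : ℝ} (hr : 0 ≤ r) (hrs : r ≤ s) :
    volume ((anchoredBox fun _ : Fin d => s) \ anchoredBox fun _ => r) =
      ENNReal.ofReal (s ^ d - r ^ d) := by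
  have hsub : (anchoredBox fun _ : Fin d => r) ⊆ anchoredBox fun _ => s :=
    fun x hx i => ⟨(hx i).1, (hx i).2.trans_le hrs⟩
  rw [measure_sdiff hsub (measurableSet_anchoredBox _).nullMeasurableSet (by
      rw [volume_anchoredBox_const hr]; exact ENNReal.ofReal_ne_top),
    volume_anchoredBox_const hr, volume_anchoredBox_const (hr.trans hrs),
    ENNReal.ofReal_sub _ (by positivity)]

end Boxes

section QuarterCells

variable {d : ℕ}

lemma eq_three_of_not_lt_three {i : Fin (2 ^ 2)} (hi : ¬ (i : ℕ) < 3) : i = 3 := by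
  revert i
  decide

lemma le_two_of_ne_three {k : Fin (2 ^ 2)} (hk : k ≠ 3) : k ≤ 2 := by
  revert k
  decide

lemma val_le_one_of_le_two {k : Fin (2 ^ 2)} (hk : k ≤ 2) (hk' : k ≠ 2) : (k : ℕ) ≤ 1 := by
  revert k
  decide

/-- The quarter cells of `[0,3/4)^d \ [0,1/2)^d` sharing a facet with `[0,1/2)^d`. -/
def IsFaceCell (k : Fin d → Fin (2 ^ 2)) : Prop :=
  (∀ c, k c ≤ 2) ∧ ∃! c, k c = 2

lemma half_le_of_mem_gridCell {x : Fin d → ℝ} {k : Fin d → Fin (2 ^ 2)}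
    (hx : x ∈ gridCell (2 ^ 2) k) {c : Fin d} (hk : 2 ≤ k c) : 1 / 2 ≤ x c := by
  have h2 : (2 : ℝ) ≤ (k c : ℕ) := by exact_mod_cast hk
  have := (Set.mem_univ_pi.1 hx c).1
  norm_num at this
  linarith

lemma le_two_of_mem_anchoredBox {x : Fin d → ℝ} {r : ℝ} (hx : x ∈ anchoredBox fun _ => r)
    (hr : r ≤ 3 / 4) {k : Fin d → Fin (2 ^ 2)} (hk : x ∈ gridCell (2 ^ 2) k) (c : Fin d) :
    k c ≤ 2 := by
  have h := (Set.mem_univ_pi.1 hk c).1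
  have hxc := (hx c).2
  norm_num at h
  have : ((k c : ℕ) : ℝ) < 3 := by linarith
  rw [Fin.le_def]
  exact Nat.lt_succ_iff.1 (by exact_mod_cast this)

lemma volume_anchoredBox_diff_inter_gridCell_div {ε : ℝ} (hε : ε ∈ Set.Ioo (0 : ℝ) (1 / 4))
    {k : Fin d → Fin (2 ^ 2)} (hk : IsFaceCell k) :
    volume (((anchoredBox fun _ => 1 / 2 + ε) \ anchoredBox fun _ => 1 / 2) ∩ gridCell (2 ^ 2) k) /
      volume (gridCell (2 ^ 2) k) = ENNReal.ofReal (4 * ε) := by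
  obtain ⟨c₀, hc₀, huniq⟩ := hk.2
  obtain ⟨hε0, hε1⟩ := hε
  have hdisj : Disjoint (anchoredBox fun _ : Fin d => 1 / 2) (gridCell (2 ^ 2) k) :=
    Set.disjoint_left.2 fun x hB hC => (hB c₀).2.not_ge (half_le_of_mem_gridCell hC hc₀.ge)
  -- The cell misses `[0,1/2)^d`; in coordinate `c₀` the box `[0,1/2+ε)^d` cuts the cell down to
  -- `[1/2,1/2+ε)`, in the other coordinates it contains the cell.
  have hfactor (j : Fin d) : volume (Set.Ico 0 (1 / 2 + ε) ∩
      Set.Ico ((k j : ℝ) / (2 ^ 2 : ℕ)) (((k j : ℝ) + 1) / (2 ^ 2 : ℕ))) =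
        if j = c₀ then ENNReal.ofReal ε else ((2 ^ 2 : ℕ) : ℝ≥0∞)⁻¹ := by
    have h4 : ((2 ^ 2 : ℕ) : ℝ) = 4 := by norm_num
    rw [Set.Ico_inter_Ico, Real.volume_Ico]
    split_ifs with hj
    · subst hj
      rw [hc₀, h4, min_eq_left (by norm_num; linarith), max_eq_right (by norm_num)]
      norm_num
    · have hkj : ((k j : ℕ) : ℝ) ≤ 1 := by
        exact_mod_cast val_le_one_of_le_two (hk.1 j) fun h => hj (huniq j h)
      rw [← volume_Ico_div (by norm_num) (k j), Real.volume_Ico, h4,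
        min_eq_right (by linarith), max_eq_right (by positivity)]
  rw [Set.sdiff_inter_right_comm, sdiff_eq_left.2 (hdisj.symm.mono_left Set.inter_subset_right),
    volume_gridCell, anchoredBox_eq_pi, gridCell, ← Set.pi_inter_distrib, volume_pi_pi]
  simp only [hfactor]
  rw [Fintype.prod_eq_mul_prod_compl c₀, if_pos rfl, Finset.prod_congr rfl fun j hj =>
      if_neg (by simpa using hj), Finset.prod_const, Finset.card_compl, Finset.card_singleton,
    Fintype.card_fin, ← pow_sub_one_mul (Fin.pos c₀).ne', mul_comm _ ((2 ^ 2 : ℕ) : ℝ≥0∞)⁻¹,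
    ENNReal.mul_div_mul_right _ _ (pow_ne_zero _ (by simp)) (ENNReal.pow_ne_top (by simp)),
    ENNReal.div_eq_inv_mul, inv_inv, ENNReal.ofReal_mul (by norm_num)]
  norm_num

end QuarterCells

section CornerConfig

/-- `K n` indexes the quarter cell of the `n`-th point; the fourth point is in the corner cell
`[3/4,1)³`. -/
def IsCornerConfig (K : Fin (2 ^ 2) → Fin 3 → Fin (2 ^ 2)) : Prop :=
  K 3 = (fun _ => 3) ∧ ∀ i : Fin (2 ^ 2), (i : ℕ) < 3 → IsFaceCell (K i)

variable {P : Fin (2 ^ 2) → Fin 3 → ℝ} {K : Fin (2 ^ 2) → Fin 3 → Fin (2 ^ 2)}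

lemma eq_corner_of_forall_le_two (hP : IsNet 2 3 2 0 P) (hK : ∀ n, P n ∈ gridCell (2 ^ 2) (K n))
    (h : ∀ i : Fin (2 ^ 2), (i : ℕ) < 3 → ∀ c, K i c ≤ 2) : K 3 = fun _ => 3 := by
  funext c
  obtain ⟨n, hn⟩ := Finite.injective_iff_surjective.1 (hP.injective_gridCell_coord hK c) 3
  have hn3 : n = 3 := eq_three_of_not_lt_three fun hlt => by
    have := h n hlt c
    simp only at hn
    rw [hn] at this
    exact absurd this (by decide)
  rwa [hn3] at hn

lemma isCornerConfig_of_corner (hP : IsNet 2 3 2 0 P) (hK : ∀ n, P n ∈ gridCell (2 ^ 2) (K n))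
    (h3 : K 3 = fun _ => 3) : IsCornerConfig K := by
  have hsurj (c : Fin 3) := Finite.injective_iff_surjective.1 (hP.injective_gridCell_coord hK c)
  have hlt (i : Fin (2 ^ 2)) (hi : (i : ℕ) < 3) (c : Fin 3) : K i c ≠ 3 := fun h => by
    have := hP.injective_gridCell_coord hK c (h.trans (congrFun h3 c).symm)
    subst this
    exact absurd hi (by decide)
  have hrow (i : Fin (2 ^ 2)) (hi : (i : ℕ) < 3) {c c' : Fin 3} (hc : K i c = 2)
      (hc' : K i c' = 2) : c = c' := by
    by_contra hcc'
    have hge (n : Fin (2 ^ 2)) (c : Fin 3) (h : K n c = 2 ∨ K n c = 3) :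
        1 / 2 ≤ P n c := half_le_of_mem_gridCell (hK n) (by rcases h with h | h <;> simp [h])
    have := hP.eq_of_two_coords_ge_half hcc' (n := i) (n' := 3)
      ⟨hge i c (.inl hc), hge i c' (.inl hc')⟩
      ⟨hge 3 c (.inr (congrFun h3 c)), hge 3 c' (.inr (congrFun h3 c'))⟩
    subst this
    exact absurd hi (by decide)
  have hcol (c : Fin 3) : ∃ j : Fin 3, K (Fin.castLE (by norm_num) j) c = 2 := by
    obtain ⟨n, hn : K n c = 2⟩ := hsurj c 2
    have hn3 : (n : ℕ) < 3 := by
      by_contra h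
      rw [eq_three_of_not_lt_three h, congrFun h3 c] at hn
      exact absurd hn (by decide)
    exact ⟨⟨n, hn3⟩, hn⟩
  -- `σ c` is the point with coordinate `c` in `[1/2,3/4)`; by `hrow` it is a bijection.
  choose σ hσ using hcol
  have hσinj : σ.Injective := fun c c' h => hrow _ (by simp) (hσ c) (h ▸ hσ c')
  refine ⟨h3, fun i hi => ⟨fun c => le_two_of_ne_three (hlt i hi c), ?_⟩⟩
  obtain ⟨c, hc⟩ := Finite.injective_iff_surjective.1 hσinj ⟨i, hi⟩
  have hσc : Fin.castLE (by norm_num) (σ c) = i := by ext; simp [hc]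
  exact ⟨c, hσc ▸ hσ c, fun c' hc' => hrow i hi hc' (hσc ▸ hσ c)⟩

lemma isCornerConfig_of_forall_mem (hP : IsNet 2 3 2 0 P) (hK : ∀ n, P n ∈ gridCell (2 ^ 2) (K n))
    {ε : ℝ} (hε : ε ∈ Set.Ioo (0 : ℝ) (1 / 4))
    (h : ∀ i : Fin (2 ^ 2), (i : ℕ) < 3 →
      P i ∈ (anchoredBox fun _ => 1 / 2 + ε) \ anchoredBox fun _ => 1 / 2) :
    IsCornerConfig K :=
  isCornerConfig_of_corner hP hK <| eq_corner_of_forall_le_two hP hK fun i hi =>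
    le_two_of_mem_anchoredBox (h i hi).1 (by linarith [hε.2]) (hK i)

end CornerConfig

-- The points `Y₁, Y₂, Y₃` of the statement are `Y 0, Y 1, Y 2`.
def firstThree : Finset (Fin (2 ^ 2)) := Finset.univ.filter fun n => (n : ℕ) < 3

lemma mem_firstThree {n : Fin (2 ^ 2)} : n ∈ firstThree ↔ (n : ℕ) < 3 := by
  simp [firstThree]

lemma pairwiseDisjoint_cellEvent_isCornerConfig {Ω : Type*} {Y : Fin (2 ^ 2) → Ω → Fin 3 → ℝ} :
    {K | IsCornerConfig K}.PairwiseDisjoint (cellEvent Y firstThree) := by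
  intro K hK K' hK' hne
  refine Set.disjoint_left.2 fun ω h h' => hne (funext fun i => ?_)
  by_cases hi : (i : ℕ) < 3
  · exact eq_of_mem_gridCell (mem_cellEvent.1 h i (mem_firstThree.2 hi))
      (mem_cellEvent.1 h' i (mem_firstThree.2 hi))
  · rw [eq_three_of_not_lt_three hi, hK.1, hK'.1]

section ZeroTwoThreeNet

variable {Ω : Type*} [MeasurableSpace Ω] {μ : Measure Ω} {Y : Fin (2 ^ 2) → Ω → Fin 3 → ℝ}

lemma ae_isNet_and_exists_gridCell (hY : IsAbstractScrambledNet μ 2 3 2 0 Y) :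
    ∀ᵐ ω ∂μ, IsNet 2 3 2 0 (fun n => Y n ω) ∧
      ∃ K : Fin (2 ^ 2) → Fin 3 → Fin (2 ^ 2), ∀ n, Y n ω ∈ gridCell (2 ^ 2) (K n) := by
  filter_upwards [hY.1] with ω hω
  choose K hK using fun n => exists_mem_gridCell (q := 2 ^ 2) (by norm_num) (hω.1 n)
  exact ⟨hω, K, hK⟩

lemma ae_le_biUnion_cellEvent {A : Set Ω}
    (h : ∀ᵐ ω ∂μ, ω ∈ A → ∃ K, IsCornerConfig K ∧ ω ∈ cellEvent Y firstThree K) :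
    A ≤ᵐ[μ] ⋃ K ∈ {K | IsCornerConfig K}, cellEvent Y firstThree K :=
  h.mono fun ω hω hA => by
    obtain ⟨K, hK, hωK⟩ := hω hA
    exact Set.mem_iUnion₂.2 ⟨K, hK, hωK⟩

lemma ae_le_biUnion_cellEvent_of_forall_mem (hY : IsAbstractScrambledNet μ 2 3 2 0 Y) {ε : ℝ}
    (hε : ε ∈ Set.Ioo (0 : ℝ) (1 / 4)) :
    {ω | ∀ n : Fin (2 ^ 2), (n : ℕ) < 3 →
      Y n ω ∈ (anchoredBox fun _ => 1 / 2 + ε) \ anchoredBox fun _ => 1 / 2} ≤ᵐ[μ]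
        ⋃ K ∈ {K | IsCornerConfig K}, cellEvent Y firstThree K :=
  ae_le_biUnion_cellEvent <| by
    filter_upwards [ae_isNet_and_exists_gridCell hY] with ω ⟨hnet, K, hK⟩ hω
    exact ⟨K, isCornerConfig_of_forall_mem hnet hK hε hω, mem_cellEvent.2 fun j _ => hK j⟩

lemma ae_le_biUnion_cellEvent_of_mem_corner (hY : IsAbstractScrambledNet μ 2 3 2 0 Y) :
    {ω | Y 3 ω ∈ gridCell (2 ^ 2) fun _ => 3} ≤ᵐ[μ]
      ⋃ K ∈ {K | IsCornerConfig K}, cellEvent Y firstThree K :=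
  ae_le_biUnion_cellEvent <| by
    filter_upwards [ae_isNet_and_exists_gridCell hY] with ω ⟨hnet, K, hK⟩ hω
    exact ⟨K, isCornerConfig_of_corner hnet hK (eq_of_mem_gridCell (hK 3) hω),
      mem_cellEvent.2 fun j _ => hK j⟩

lemma measure_corner_inter_cellEvent (hY : IsAbstractScrambledNet μ 2 3 2 0 Y)
    {K : Fin (2 ^ 2) → Fin 3 → Fin (2 ^ 2)} (hK : IsCornerConfig K) :
    μ ({ω | Y 3 ω ∈ gridCell (2 ^ 2) fun _ => 3} ∩ cellEvent Y firstThree K) =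
      μ (cellEvent Y firstThree K) := by
  refine le_antisymm (measure_mono Set.inter_subset_right) (measure_mono_ae ?_)
  filter_upwards [ae_isNet_and_exists_gridCell hY] with ω ⟨hnet, K', hK'⟩ hω
  have hKK' (i : Fin (2 ^ 2)) (hi : (i : ℕ) < 3) : K' i = K i :=
    eq_of_mem_gridCell (hK' i) (mem_cellEvent.1 hω i (mem_firstThree.2 hi))
  have h3 := eq_corner_of_forall_le_two hnet hK' fun i hi => hKK' i hi ▸ (hK.2 i hi).1
  refine ⟨?_, hω⟩
  show Y 3 ω ∈ gridCell (2 ^ 2) fun _ => 3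
  rw [← h3]
  exact hK' 3

lemma measure_forall_mem_inter_cellEvent [IsProbabilityMeasure μ]
    (hY : IsAbstractScrambledNet μ 2 3 2 0 Y) {ε : ℝ} (hε : ε ∈ Set.Ioo (0 : ℝ) (1 / 4))
    {K : Fin (2 ^ 2) → Fin 3 → Fin (2 ^ 2)} (hK : IsCornerConfig K) :
    μ ({ω | ∀ n : Fin (2 ^ 2), (n : ℕ) < 3 →
      Y n ω ∈ (anchoredBox fun _ => 1 / 2 + ε) \ anchoredBox fun _ => 1 / 2} ∩
        cellEvent Y firstThree K) = ENNReal.ofReal (4 * ε) ^ 3 * μ (cellEvent Y firstThree K) := by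
  have hD := (measurableSet_anchoredBox fun _ : Fin 3 => 1 / 2 + ε).diff
    (measurableSet_anchoredBox fun _ => 1 / 2)
  have h := hY.measure_inter_cellEvent two_pos hD ⟨0, mem_firstThree.2 (by decide)⟩ K
  rw [Finset.prod_congr rfl fun j hj =>
      volume_anchoredBox_diff_inter_gridCell_div hε (hK.2 j (mem_firstThree.1 hj)),
    Finset.prod_const, show firstThree.card = 3 from rfl] at h
  convert h using 3
  ext ω
  simp only [Set.mem_iInter, Set.mem_ofPred_eq, mem_firstThree]

lemma measure_forall_mem_anchoredBox_diff [IsProbabilityMeasure μ]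
    (hY : IsAbstractScrambledNet μ 2 3 2 0 Y) {ε : ℝ} (hε : ε ∈ Set.Ioo (0 : ℝ) (1 / 4)) :
    μ {ω | ∀ n : Fin (2 ^ 2), (n : ℕ) < 3 →
      Y n ω ∈ (anchoredBox fun _ => 1 / 2 + ε) \ anchoredBox fun _ => 1 / 2} =
        ENNReal.ofReal (ε ^ 3) := by
  set S := {K | IsCornerConfig K}
  set T := {ω | ∀ n : Fin (2 ^ 2), (n : ℕ) < 3 →
    Y n ω ∈ (anchoredBox fun _ => 1 / 2 + ε) \ anchoredBox fun _ => 1 / 2}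
  set corner := {ω | Y 3 ω ∈ gridCell (2 ^ 2) fun _ => 3}
  have hfin : S.Finite := Set.toFinite S
  have hE (K) (_ : K ∈ S) : NullMeasurableSet (cellEvent Y firstThree K) μ :=
    hY.nullMeasurableSet_cellEvent two_pos _ K
  calc μ T = ∑ᶠ K ∈ S, μ (T ∩ cellEvent Y firstThree K) :=
        measure_eq_finsum_measure_inter hfin hE pairwiseDisjoint_cellEvent_isCornerConfig
          (ae_le_biUnion_cellEvent_of_forall_mem hY hε)
    _ = ∑ᶠ K ∈ S, ENNReal.ofReal (4 * ε) ^ 3 * μ (corner ∩ cellEvent Y firstThree K) :=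
        finsum_mem_congr rfl fun K hK => by
          rw [measure_forall_mem_inter_cellEvent hY hε hK, measure_corner_inter_cellEvent hY hK]
    _ = ENNReal.ofReal (4 * ε) ^ 3 * μ corner := by
        rw [← mul_finsum_mem' _ _ hfin, ← measure_eq_finsum_measure_inter hfin hE
          pairwiseDisjoint_cellEvent_isCornerConfig (ae_le_biUnion_cellEvent_of_mem_corner hY)]
    _ = ENNReal.ofReal (ε ^ 3) := by
        rw [hY.measure_mem_gridCell, volume_gridCell, ← mul_pow, ENNReal.ofReal_pow hε.1.le,
          ENNReal.ofReal_mul (by norm_num), mul_comm, ← mul_assoc]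
        norm_num [ENNReal.inv_mul_cancel]

end ZeroTwoThreeNet

/-- For an abstract scrambled `(0,2,3)`-net in base `2`, `ε ∈ (0,1/4)` and
`D = [0,1/2+ε)^3 \ [0,1/2)^3`: `P(Y_1,Y_2,Y_3 ∈ D) = ε³` and
`P(Y_i ∈ D) = (1/2+ε)³ - (1/2)³` for `i ∈ {1,2,3}`. -/
theorem stmt16 {Ω : Type*} [MeasurableSpace Ω] (μ : Measure Ω) [IsProbabilityMeasure μ]
    (Y : Fin (2 ^ 2) → Ω → Fin 3 → ℝ) (hY : IsAbstractScrambledNet μ 2 3 2 0 Y)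
    (ε : ℝ) (hε : ε ∈ Set.Ioo (0 : ℝ) (1 / 4))
    (D : Set (Fin 3 → ℝ))
    (hD : D = anchoredBox (fun _ => 1 / 2 + ε) \ anchoredBox (fun _ => 1 / 2)) :
    μ {ω | ∀ n : Fin (2 ^ 2), (n : ℕ) < 3 → Y n ω ∈ D} = ENNReal.ofReal (ε ^ 3) ∧
    ∀ n : Fin (2 ^ 2), (n : ℕ) < 3 →
      μ {ω | Y n ω ∈ D} = ENNReal.ofReal ((1 / 2 + ε) ^ 3 - (1 / 2) ^ 3) := by
  subst hD
  refine ⟨measure_forall_mem_anchoredBox_diff hY hε, fun n _ => ?_⟩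
  rw [hY.measure_mem_eq_volume two_pos
      ((measurableSet_anchoredBox _).diff (measurableSet_anchoredBox _))
      (Set.sdiff_subset.trans (anchoredBox_subset_unitCube fun _ => by linarith [hε.2])) n,
    volume_anchoredBox_diff (by norm_num) (by linarith [hε.1])]

end LHSPaper
end

section
/- Let (X_1, X_2, X_3, X_4) be a Latin hypercube sample of N = 4 points in [0,1)^3, let ε ∈ (0, 1/4), and set D = [0, 1/2 + ε)^3 \ [0, 1/2)^3. Then P(X_1 ∈ D, X_2 ∈ D, X_3 ∈ D) = (2/9) ε^3, and consequently lim_{ε → 0+} P(X_1 ∈ D, X_2 ∈ D, X_3 ∈ D) / ∏_{i=1}^3 P(X_i ∈ D) = (2/9) · (4/3)^3 = 128/243. -/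
open MeasureTheory ProbabilityTheory Filter
open scoped ENNReal Classical

namespace LHSPaper

/-!
Almost surely every `U_{n,j}` lies in `[0,1)`, and then the coordinate
`X_{n,j} = (π_j(n) + U_{n,j}) / 4` lies in `[0, 1/2 + ε)` iff `π_j(n) ≤ 1`, or `π_j(n) = 2` and
`U_{n,j} < 4ε`; it lies in `[0, 1/2)` iff `π_j(n) ≤ 1`. So `X_n ∈ D` means that all coordinates
satisfy the first condition and the set `A` of those with `π_j(n) = 2` is nonempty, and `X_1, X_2, X_3 ∈ D` forces every `π_j` to fix the
fourth point and to send a different one of the first three points, `σ(j)`, to `2`. Each of these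
events, for fixed `A` resp. `σ ∈ S_3`, is an intersection of conditions on distinct independent
sources of randomness, so its probability is a product: `ε^|A| (1/2)^(3-|A|)` resp.
`(2/24)^3 (4ε)^3`. Summing gives `P(X_n ∈ D) = (1/2 + ε)^3 - 1/8 = ε (3/4 + O(ε))` and
`P(X_1, X_2, X_3 ∈ D) = 6 (ε/3)^3 = (2/9) ε^3`.
-/

open scoped Nat

namespace IsLHS

variable {Ω : Type*} [MeasurableSpace Ω] {μ : Measure Ω} {d N : ℕ}
  {X : Fin N → Ω → Fin d → ℝ} {π : Fin d → Ω → Equiv.Perm (Fin N)} {U : Fin N → Ω → Fin d → ℝ}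

lemma aemeasurable_perm (h : IsLHS μ d N X π U) (j : Fin d) : AEMeasurable (π j) μ := by
  by_contra hπ
  have := congrArg (· Set.univ) (h.1 j)
  simp [Measure.map_of_not_aemeasurable hπ] at this

lemma aemeasurable_unif (h : IsLHS μ d N X π U) (n : Fin N) (j : Fin d) :
    AEMeasurable (fun ω => U n ω j) μ := by
  by_contra hU
  have := congrArg (· Set.univ) (h.2.1 n j)
  simp [Measure.map_of_not_aemeasurable hU] at this

lemma ae_unif_mem_Ico (h : IsLHS μ d N X π U) : ∀ᵐ ω ∂μ, ∀ n j, U n ω j ∈ Set.Ico (0 : ℝ) 1 := by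
  simp only [ae_all_iff]
  intro n j
  refine ae_of_ae_map (h.aemeasurable_unif n j) (p := (· ∈ Set.Ico (0 : ℝ) 1)) ?_
  rw [h.2.1 n j]
  exact ae_restrict_mem measurableSet_Ico

lemma measure_perm_preimage (h : IsLHS μ d N X π U) (j : Fin d) (P : Finset (Equiv.Perm (Fin N))) :
    μ (π j ⁻¹' P) = ENNReal.ofReal (P.card / N !) := by
  rw [← Measure.map_apply_of_aemeasurable (h.aemeasurable_perm j) MeasurableSpace.measurableSet_top,
    h.1 j, PMF.toMeasure_apply_finset, ENNReal.ofReal_div_of_pos (by positivity)]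
  simp [PMF.uniformOfFintype_apply, Fintype.card_perm, div_eq_mul_inv]

lemma measure_unif_preimage_Ico (h : IsLHS μ d N X π U) (n : Fin N) (j : Fin d) {b : ℝ}
    (hb : b ≤ 1) : μ ((fun ω => U n ω j) ⁻¹' Set.Ico 0 b) = ENNReal.ofReal b := by
  rw [← Measure.map_apply_of_aemeasurable (h.aemeasurable_unif n j) measurableSet_Ico, h.2.1 n j,
    Measure.restrict_apply measurableSet_Ico, Set.Ico_inter_Ico, max_self, min_eq_left hb,
    Real.volume_Ico, sub_zero]

end IsLHS

section Cylinder

variable {Ω : Type*} [MeasurableSpace Ω] {μ : Measure Ω} {d N : ℕ}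
  {X : Fin N → Ω → Fin d → ℝ} {π : Fin d → Ω → Equiv.Perm (Fin N)} {U : Fin N → Ω → Fin d → ℝ}

def lhsCylinder (π : Fin d → Ω → Equiv.Perm (Fin N)) (U : Fin N → Ω → Fin d → ℝ)
    (P : Fin d → Finset (Equiv.Perm (Fin N))) (J : Finset (Fin d)) (ν : Fin d → Fin N)
    (b : Fin d → ℝ) : Set Ω :=
  {ω | ∀ j, π j ω ∈ P j ∧ (j ∈ J → U (ν j) ω j ∈ Set.Ico 0 (b j))}

lemma IsLHS.measure_lhsCylinder (h : IsLHS μ d N X π U) (P : Fin d → Finset (Equiv.Perm (Fin N)))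
    (J : Finset (Fin d)) (ν : Fin d → Fin N) {b : Fin d → ℝ} (hb : ∀ j ∈ J, b j ∈ Set.Icc 0 1) :
    μ (lhsCylinder π U P J ν b) =
      ENNReal.ofReal ((∏ j, ((P j).card / N ! : ℝ)) * ∏ j ∈ J, b j) := by
  have hν : Function.Injective fun j : Fin d => (ν j, j) := fun _ _ hj => congrArg Prod.snd hj
  let S := (Finset.univ : Finset (Fin d)).disjSum (J.map ⟨_, hν⟩)
  let C : (i : Fin d ⊕ (Fin N × Fin d)) → Set (lhsβ d N i)
    | .inl j => (P j : Set (Equiv.Perm (Fin N)))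
    | .inr p => (Set.Ico 0 (b p.2) : Set ℝ)
  have hC : ∀ i ∈ S, MeasurableSet[lhsMS d N i] (C i)
    | .inl _, _ => MeasurableSpace.measurableSet_top
    | .inr p, _ => (measurableSet_Ico : MeasurableSet (Set.Ico (0 : ℝ) (b p.2)))
  have hcyl : lhsCylinder π U P J ν b = ⋂ i ∈ S, lhsFun π U i ⁻¹' C i := by
    ext ω
    simp only [lhsCylinder, S, C, lhsFun, Set.mem_iInter, Set.mem_preimage, Finset.mem_disjSum,
      Finset.mem_univ, Finset.mem_map, Function.Embedding.coeFn_mk, Sum.forall, Set.mem_ofPred_eq,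
      Sum.inl.injEq, Sum.inr.injEq, reduceCtorEq, true_and, and_false, exists_false, exists_eq,
      or_false, false_or, forall_const, forall_exists_index, and_imp, forall_apply_eq_imp_iff₂]
    exact forall_and
  rw [hcyl, h.2.2.1.measure_inter_preimage_eq_mul S hC, Finset.prod_disjSum, Finset.prod_map,
    ENNReal.ofReal_mul (Finset.prod_nonneg fun _ _ => by positivity),
    ENNReal.ofReal_prod_of_nonneg (fun _ _ => by positivity),
    ENNReal.ofReal_prod_of_nonneg (fun j hj => (hb j hj).1)]
  simp only [Function.Embedding.coeFn_mk]
  congr 1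
  · exact Finset.prod_congr rfl fun j _ => h.measure_perm_preimage j (P j)
  · exact Finset.prod_congr rfl fun j hj => h.measure_unif_preimage_Ico (ν j) j (hb j hj).2

lemma IsLHS.nullMeasurableSet_lhsCylinder (h : IsLHS μ d N X π U)
    (P : Fin d → Finset (Equiv.Perm (Fin N))) (J : Finset (Fin d)) (ν : Fin d → Fin N)
    (b : Fin d → ℝ) : NullMeasurableSet (lhsCylinder π U P J ν b) μ := by
  have hcyl : lhsCylinder π U P J ν b =
      ⋂ j, π j ⁻¹' P j ∩ {ω | j ∈ J → U (ν j) ω j ∈ Set.Ico 0 (b j)} := by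
    ext; simp [lhsCylinder]
  rw [hcyl]
  refine .iInter fun j => .inter ((h.aemeasurable_perm j).nullMeasurableSet_preimage
    MeasurableSpace.measurableSet_top) ?_
  by_cases hj : j ∈ J
  · simp only [hj, forall_const]
    exact (h.aemeasurable_unif (ν j) j).nullMeasurableSet_preimage measurableSet_Ico
  · simp [hj]

end Cylinder

lemma forall_or_and_not_forall_iff_exists_finset {ι : Type*} [Fintype ι] {a b : ι → Prop}
    (hab : ∀ i, b i → ¬ a i) :
    ((∀ i, a i ∨ b i) ∧ ¬ ∀ i, a i) ↔ ∃ A : Finset ι, A ≠ ∅ ∧ ∀ i, if i ∈ A then b i else a i := by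
  constructor
  · rintro ⟨hor, hna⟩
    refine ⟨Finset.univ.filter b, ?_, fun i => ?_⟩
    · obtain ⟨i, hi⟩ := not_forall.1 hna
      exact Finset.ne_empty_of_mem
        (Finset.mem_filter.2 ⟨Finset.mem_univ i, (hor i).resolve_left hi⟩)
    · split_ifs with hi
      · exact (Finset.mem_filter.1 hi).2
      · exact (hor i).resolve_right fun hb => hi (Finset.mem_filter.2 ⟨Finset.mem_univ i, hb⟩)
  · rintro ⟨A, hA, hAi⟩
    refine ⟨fun i => ?_, fun ha => ?_⟩
    · have := hAi i
      split_ifs at this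
      exacts [.inr this, .inl this]
    · obtain ⟨i, hi⟩ := Finset.nonempty_iff_ne_empty.2 hA
      have := hAi i
      rw [if_pos hi] at this
      exact hab i this (ha i)

lemma Fintype.sum_prod_ite_mul_prod {ι R : Type*} [Fintype ι] [DecidableEq ι] [CommSemiring R]
    (a b c : R) :
    ∑ A : Finset ι, (∏ i, if i ∈ A then a else b) * c ^ A.card = (a * c + b) ^ Fintype.card ι := by
  rw [← Finset.card_univ, ← Finset.prod_const, Fintype.prod_add]
  refine Finset.sum_congr rfl fun A _ => ?_
  rw [← Finset.prod_mul_prod_compl A, Finset.prod_congr rfl fun _ hi => if_pos hi,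
    Finset.prod_congr rfl fun _ hi => if_neg (Finset.mem_compl.1 hi), Finset.prod_mul_distrib]
  simp only [Finset.prod_const]
  ring

lemma apply_three_eq_three_of_forall_castSucc_le_two {p : Equiv.Perm (Fin 4)}
    (hp : ∀ m : Fin 3, p m.castSucc ≤ 2) : p 3 = 3 := by
  revert p; decide

lemma forall_mem_shell_iff_exists_perm {p : Fin 3 → Equiv.Perm (Fin 4)} {c : Fin 4 → Fin 3 → Prop} :
    (∀ m : Fin 3, (∀ j, p j m.castSucc ≤ 1 ∨ (p j m.castSucc = 2 ∧ c m.castSucc j)) ∧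
        ¬ ∀ j, p j m.castSucc ≤ 1) ↔
      ∃ σ : Equiv.Perm (Fin 3), ∀ j, (p j 3 = 3 ∧ p j (σ j).castSucc = 2) ∧ c (σ j).castSucc j := by
  constructor
  · intro hp
    have hfix : ∀ j, p j 3 = 3 := fun j => apply_three_eq_three_of_forall_castSucc_le_two
      fun m => ((hp m).1 j).elim (le_trans · (by decide)) (·.1.le)
    have hpre : ∀ j, ∃ m : Fin 3, m.castSucc = (p j).symm 2 := fun j =>
      Fin.exists_castSucc_eq.2 fun h3 => by
        have := (p j).apply_symm_apply 2
        rw [h3, show Fin.last 3 = 3 from rfl, hfix j] at this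
        exact absurd this (by decide)
    choose f hf using hpre
    have hf2 : ∀ j, p j (f j).castSucc = 2 := fun j => by rw [hf j, Equiv.apply_symm_apply]
    have hsurj : Function.Surjective f := by
      intro m
      obtain ⟨j, hj⟩ := not_forall.1 (hp m).2
      have h2 : p j m.castSucc = 2 := (((hp m).1 j).resolve_left hj).1
      exact ⟨j, Fin.castSucc_injective 3 (by rw [hf j, ← h2, Equiv.symm_apply_apply])⟩
    refine ⟨Equiv.ofBijective f ⟨Finite.injective_iff_surjective.2 hsurj, hsurj⟩,
      fun j => ⟨⟨hfix j, hf2 j⟩, ?_⟩⟩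
    exact (((hp (f j)).1 j).resolve_left (by rw [hf2 j]; decide)).2
  · rintro ⟨σ, hσ⟩ m
    refine ⟨fun j => ?_, fun hle => ?_⟩
    · by_cases hj : σ j = m
      · subst hj
        exact .inr ⟨(hσ j).1.2, (hσ j).2⟩
      · refine .inl ?_
        have h2 : p j m.castSucc ≠ 2 := fun h2 =>
          hj (Fin.castSucc_injective 3 ((p j).injective ((hσ j).1.2.trans h2.symm)))
        have h3 : p j m.castSucc ≠ 3 := fun h3 =>
          Fin.castSucc_ne_last m ((p j).injective (h3.trans (hσ j).1.1.symm))
        revert h2 h3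
        generalize p j m.castSucc = k
        revert k; decide
    · have h2 := (hσ (σ.symm m)).1.2
      rw [σ.apply_symm_apply] at h2
      have := hle (σ.symm m)
      rw [h2] at this
      exact absurd this (by decide)

lemma card_filter_perm_apply_eq_two (n : Fin 4) :
    (Finset.univ.filter fun p : Equiv.Perm (Fin 4) => p n = 2).card = 6 := by
  revert n; decide

lemma card_filter_perm_apply_le_one (n : Fin 4) :
    (Finset.univ.filter fun p : Equiv.Perm (Fin 4) => p n ≤ 1).card = 12 := by
  revert n; decide

lemma card_filter_perm_fix_three_apply_eq_two (m : Fin 3) :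
    (Finset.univ.filter fun p : Equiv.Perm (Fin 4) => p 3 = 3 ∧ p m.castSucc = 2).card = 2 := by
  revert m; decide

lemma cast_add_div_four_mem_Ico_half_add_iff {k : Fin 4} {u ε : ℝ} (hu : u ∈ Set.Ico 0 1)
    (hε : ε ∈ Set.Ioo 0 (1 / 4)) :
    ((k : ℕ) + u) / 4 ∈ Set.Ico 0 (1 / 2 + ε) ↔ k ≤ 1 ∨ (k = 2 ∧ u ∈ Set.Ico 0 (4 * ε)) := by
  obtain ⟨hu0, hu1⟩ := hu
  obtain ⟨hε0, hε1⟩ := hε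
  fin_cases k <;> simp [Set.mem_Ico, hu0]
  all_goals first
    | exact ⟨by linarith, by linarith⟩
    | (intro; linarith)
    | exact ⟨fun h => by linarith [h.2], fun h => ⟨by linarith, by linarith⟩⟩

lemma cast_add_div_four_mem_Ico_half_iff {k : Fin 4} {u : ℝ} (hu : u ∈ Set.Ico 0 1) :
    ((k : ℕ) + u) / 4 ∈ Set.Ico 0 (1 / 2) ↔ k ≤ 1 := by
  obtain ⟨hu0, hu1⟩ := hu
  fin_cases k <;> simp [Set.mem_Ico]
  all_goals first
    | exact ⟨by linarith, by linarith⟩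
    | (intro; linarith)

def cornerShell (ε : ℝ) : Set (Fin 3 → ℝ) :=
  anchoredBox (fun _ => 1 / 2 + ε) \ anchoredBox (fun _ => 1 / 2)

section FourPoints

variable {Ω : Type*} [MeasurableSpace Ω] {μ : Measure Ω}
  {X : Fin 4 → Ω → Fin 3 → ℝ} {π : Fin 3 → Ω → Equiv.Perm (Fin 4)} {U : Fin 4 → Ω → Fin 3 → ℝ}
  {ε : ℝ} {ω : Ω}

lemma IsLHS.mem_anchoredBox_half_add_iff (h : IsLHS μ 3 4 X π U) (hε : ε ∈ Set.Ioo 0 (1 / 4))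
    (hω : ∀ n j, U n ω j ∈ Set.Ico 0 1) (n : Fin 4) :
    X n ω ∈ anchoredBox (fun _ => 1 / 2 + ε) ↔
      ∀ j, π j ω n ≤ 1 ∨ (π j ω n = 2 ∧ U n ω j ∈ Set.Ico 0 (4 * ε)) := by
  refine forall_congr' fun j => ?_
  rw [h.2.2.2 n j ω, Nat.cast_ofNat]
  exact cast_add_div_four_mem_Ico_half_add_iff (hω n j) hε

lemma IsLHS.mem_anchoredBox_half_iff (h : IsLHS μ 3 4 X π U)
    (hω : ∀ n j, U n ω j ∈ Set.Ico 0 1) (n : Fin 4) :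
    X n ω ∈ anchoredBox (fun _ => 1 / 2) ↔ ∀ j, π j ω n ≤ 1 := by
  refine forall_congr' fun j => ?_
  rw [h.2.2.2 n j ω, Nat.cast_ofNat]
  exact cast_add_div_four_mem_Ico_half_iff (hω n j)

lemma IsLHS.mem_cornerShell_iff (h : IsLHS μ 3 4 X π U) (hε : ε ∈ Set.Ioo 0 (1 / 4))
    (hω : ∀ n j, U n ω j ∈ Set.Ico 0 1) (n : Fin 4) :
    X n ω ∈ cornerShell ε ↔
      (∀ j, π j ω n ≤ 1 ∨ (π j ω n = 2 ∧ U n ω j ∈ Set.Ico 0 (4 * ε))) ∧ ¬ ∀ j, π j ω n ≤ 1 := by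
  rw [cornerShell, Set.mem_sdiff, h.mem_anchoredBox_half_add_iff hε hω,
    h.mem_anchoredBox_half_iff hω]

lemma IsLHS.measure_mem_cornerShell (h : IsLHS μ 3 4 X π U) (hε : ε ∈ Set.Ioo 0 (1 / 4))
    (n : Fin 4) :
    μ {ω | X n ω ∈ cornerShell ε} = ENNReal.ofReal ((1 / 2 + ε) ^ 3 - (1 / 2) ^ 3) := by
  let P (A : Finset (Fin 3)) (j : Fin 3) : Finset (Equiv.Perm (Fin 4)) :=
    Finset.univ.filter fun p => if j ∈ A then p n = 2 else p n ≤ 1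
  let E (A : Finset (Fin 3)) : Set Ω := lhsCylinder π U (P A) A (fun _ => n) (fun _ => 4 * ε)
  have hE : ∀ A ω, ω ∈ E A ↔
      ∀ j, if j ∈ A then π j ω n = 2 ∧ U n ω j ∈ Set.Ico 0 (4 * ε) else π j ω n ≤ 1 := by
    intro A ω
    refine forall_congr' fun j => ?_
    by_cases hj : j ∈ A <;> simp [P, hj]
  have hae : {ω | X n ω ∈ cornerShell ε} =ᵐ[μ] ⋃ A ∈ Finset.univ.erase ∅, E A := by
    refine Filter.eventuallyEq_set.2 (h.ae_unif_mem_Ico.mono fun ω hω => ?_)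
    rw [Set.mem_ofPred_eq, h.mem_cornerShell_iff hε hω, forall_or_and_not_forall_iff_exists_finset
        fun j h2 h1 => absurd (h2.1 ▸ h1) (by decide)]
    simp [hE]
  have hmem_iff : ∀ A ω, ω ∈ E A → ∀ j, j ∈ A ↔ π j ω n = 2 := by
    intro A ω hω j
    have := (hE A ω).1 hω j
    split_ifs at this with hj
    · exact iff_of_true hj this.1
    · exact iff_of_false hj fun h2 => absurd (h2 ▸ this) (by decide)
  have hdisj : ((Finset.univ.erase ∅ : Finset (Finset (Fin 3))) : Set (Finset (Fin 3))).Pairwise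
      (Function.onFun (AEDisjoint μ) E) := by
    intro A _ A' _ hne
    refine (Set.disjoint_left.2 fun ω hA hA' => hne (Finset.ext fun j => ?_)).aedisjoint
    exact (hmem_iff A ω hA j).trans (hmem_iff A' ω hA' j).symm
  have hcard : ∀ A j, ((P A j).card : ℝ) / (4 ! : ℕ) = if j ∈ A then 1 / 4 else 1 / 2 := by
    intro A j
    by_cases hj : j ∈ A <;>
      norm_num [P, hj, card_filter_perm_apply_eq_two, card_filter_perm_apply_le_one, Nat.factorial]
  have h4ε : 4 * ε ∈ Set.Icc 0 1 := ⟨by linarith [hε.1], by linarith [hε.2]⟩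
  rw [measure_congr hae,
    measure_biUnion_finset₀ hdisj fun A _ => h.nullMeasurableSet_lhsCylinder _ _ _ _]
  simp only [E, h.measure_lhsCylinder _ _ _ fun _ _ => h4ε, hcard, Finset.prod_const]
  rw [← ENNReal.ofReal_sum_of_nonneg fun A _ =>
      mul_nonneg (Finset.prod_nonneg fun _ _ => by split_ifs <;> norm_num) (pow_nonneg h4ε.1 _),
    Finset.sum_erase_eq_sub (Finset.mem_univ _), Fintype.sum_prod_ite_mul_prod]
  congr 1
  simp only [Fintype.card_fin, Finset.notMem_empty, if_false, Finset.prod_const, Finset.card_univ,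
    Finset.card_empty, pow_zero, mul_one]
  ring

lemma IsLHS.measure_three_mem_cornerShell (h : IsLHS μ 3 4 X π U) (hε : ε ∈ Set.Ioo 0 (1 / 4)) :
    μ {ω | X 0 ω ∈ cornerShell ε ∧ X 1 ω ∈ cornerShell ε ∧ X 2 ω ∈ cornerShell ε} =
      ENNReal.ofReal (2 / 9 * ε ^ 3) := by
  let P (σ : Equiv.Perm (Fin 3)) (j : Fin 3) : Finset (Equiv.Perm (Fin 4)) :=
    Finset.univ.filter fun p => p 3 = 3 ∧ p (σ j).castSucc = 2
  let E (σ : Equiv.Perm (Fin 3)) : Set Ω :=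
    lhsCylinder π U (P σ) Finset.univ (fun j => (σ j).castSucc) (fun _ => 4 * ε)
  have hE : ∀ σ ω, ω ∈ E σ ↔
      ∀ j, (π j ω 3 = 3 ∧ π j ω (σ j).castSucc = 2) ∧ U (σ j).castSucc ω j ∈ Set.Ico 0 (4 * ε) := by
    intro σ ω
    simp [E, P, lhsCylinder]
  have hae : {ω | X 0 ω ∈ cornerShell ε ∧ X 1 ω ∈ cornerShell ε ∧ X 2 ω ∈ cornerShell ε}
      =ᵐ[μ] ⋃ σ, E σ := by
    refine Filter.eventuallyEq_set.2 (h.ae_unif_mem_Ico.mono fun ω hω => ?_)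
    calc (X 0 ω ∈ cornerShell ε ∧ X 1 ω ∈ cornerShell ε ∧ X 2 ω ∈ cornerShell ε)
        ↔ ∀ m : Fin 3, X m.castSucc ω ∈ cornerShell ε :=
          ⟨fun hX m => by fin_cases m <;> simp [hX], fun hX => ⟨hX 0, hX 1, hX 2⟩⟩
      _ ↔ ∃ σ, ω ∈ E σ := by
          simp only [h.mem_cornerShell_iff hε hω, hE]
          exact forall_mem_shell_iff_exists_perm (p := fun j => π j ω)
            (c := fun n j => U n ω j ∈ Set.Ico 0 (4 * ε))
      _ ↔ ω ∈ ⋃ σ, E σ := Set.mem_iUnion.symm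
  have hdisj : Pairwise (Function.onFun Disjoint E) := by
    intro σ σ' hne
    refine Set.disjoint_left.2 fun ω hσ hσ' => hne (Equiv.ext fun j => ?_)
    exact Fin.castSucc_injective 3
      ((π j ω).injective ((((hE σ ω).1 hσ j).1.2).trans (((hE σ' ω).1 hσ' j).1.2).symm))
  have h4ε : 4 * ε ∈ Set.Icc 0 1 := ⟨by linarith [hε.1], by linarith [hε.2]⟩
  rw [measure_congr hae, measure_iUnion₀ (hdisj.mono fun _ _ => Disjoint.aedisjoint)
    fun σ => h.nullMeasurableSet_lhsCylinder _ _ _ _, tsum_fintype]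
  simp only [E, h.measure_lhsCylinder _ _ _ fun _ _ => h4ε, P,
    card_filter_perm_fix_three_apply_eq_two]
  rw [Finset.sum_const, Finset.card_univ, Fintype.card_perm, Fintype.card_fin, nsmul_eq_mul,
    ← ENNReal.ofReal_natCast, ← ENNReal.ofReal_mul (by positivity)]
  congr 1
  norm_num [Nat.factorial]
  ring

end FourPoints

theorem stmt18_general {Ω : Type*} [MeasurableSpace Ω] (μ : Measure Ω)
    (X : Fin 4 → Ω → Fin 3 → ℝ) (π : Fin 3 → Ω → Equiv.Perm (Fin 4))
    (U : Fin 4 → Ω → Fin 3 → ℝ) (h : IsLHS μ 3 4 X π U)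
    (D : ℝ → Set (Fin 3 → ℝ))
    (hD : ∀ ε : ℝ, D ε = anchoredBox (fun _ => 1 / 2 + ε) \ anchoredBox (fun _ => 1 / 2)) :
    (∀ ε ∈ Set.Ioo (0 : ℝ) (1 / 4),
      μ {ω | X 0 ω ∈ D ε ∧ X 1 ω ∈ D ε ∧ X 2 ω ∈ D ε} =
        ENNReal.ofReal (2 / 9 * ε ^ 3)) ∧
    Filter.Tendsto
      (fun ε : ℝ => (μ {ω | X 0 ω ∈ D ε ∧ X 1 ω ∈ D ε ∧ X 2 ω ∈ D ε}).toReal /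
        ((μ {ω | X 0 ω ∈ D ε}).toReal * (μ {ω | X 1 ω ∈ D ε}).toReal *
          (μ {ω | X 2 ω ∈ D ε}).toReal))
      (nhdsWithin 0 (Set.Ioi 0)) (nhds (128 / 243)) := by
  obtain rfl : D = cornerShell := funext hD
  refine ⟨fun ε hε => h.measure_three_mem_cornerShell hε, ?_⟩
  have hlim : Tendsto (fun ε : ℝ => 2 / 9 / (3 / 4 + 3 / 2 * ε + ε ^ 2) ^ 3)
      (nhdsWithin 0 (Set.Ioi 0)) (nhds (128 / 243)) := by
    have hcont : ContinuousAt (fun ε : ℝ => 2 / 9 / (3 / 4 + 3 / 2 * ε + ε ^ 2) ^ 3) 0 := by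
      fun_prop (disch := norm_num)
    convert hcont.tendsto.mono_left nhdsWithin_le_nhds using 2
    norm_num
  refine hlim.congr' ?_
  filter_upwards [Ioo_mem_nhdsGT (by norm_num : (0 : ℝ) < 1 / 4)] with ε hε
  have hε0 : 0 < ε := hε.1
  have hq : (1 / 2 + ε) ^ 3 - (1 / 2) ^ 3 = ε * (3 / 4 + 3 / 2 * ε + ε ^ 2) := by ring
  rw [h.measure_three_mem_cornerShell hε, h.measure_mem_cornerShell hε,
    h.measure_mem_cornerShell hε, h.measure_mem_cornerShell hε, hq, ENNReal.toReal_ofReal (by positivity),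
    ENNReal.toReal_ofReal (by positivity)]
  field_simp

/-- For a LHS of `4` points in `[0,1)^3`, `ε ∈ (0,1/4)` and
`D = [0,1/2+ε)^3 \ [0,1/2)^3`: `P(X_1,X_2,X_3 ∈ D) = (2/9)ε³`, and the ratio
`P(X_1,X_2,X_3 ∈ D)/∏_{i=1}^3 P(X_i ∈ D)` tends to `128/243` as `ε → 0⁺`. -/
theorem stmt18 {Ω : Type*} [MeasurableSpace Ω] (μ : Measure Ω) [IsProbabilityMeasure μ]
    (X : Fin 4 → Ω → Fin 3 → ℝ) (π : Fin 3 → Ω → Equiv.Perm (Fin 4))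
    (U : Fin 4 → Ω → Fin 3 → ℝ) (h : IsLHS μ 3 4 X π U)
    (D : ℝ → Set (Fin 3 → ℝ))
    (hD : ∀ ε : ℝ, D ε = anchoredBox (fun _ => 1 / 2 + ε) \ anchoredBox (fun _ => 1 / 2)) :
    (∀ ε ∈ Set.Ioo (0 : ℝ) (1 / 4),
      μ {ω | X 0 ω ∈ D ε ∧ X 1 ω ∈ D ε ∧ X 2 ω ∈ D ε} =
        ENNReal.ofReal (2 / 9 * ε ^ 3)) ∧
    Filter.Tendsto
      (fun ε : ℝ => (μ {ω | X 0 ω ∈ D ε ∧ X 1 ω ∈ D ε ∧ X 2 ω ∈ D ε}).toReal /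
        ((μ {ω | X 0 ω ∈ D ε}).toReal * (μ {ω | X 1 ω ∈ D ε}).toReal *
          (μ {ω | X 2 ω ∈ D ε}).toReal))
      (nhdsWithin 0 (Set.Ioi 0)) (nhds (128 / 243)) :=
  stmt18_general μ X π U h D hD

end LHSPaper
end
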